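/- arXiv:2511.09351 — 4 statements merged into one kernel-verified Lean document; each statement's English description precedes it below -/
import Mathlib

section
/- Let E be a block cipher with key length κ and block length n, with decryption D. Let α ∈ {0,1}^κ be a constant, σ : {0,1}^n → {0,1}^n a function, and R : {0,1}^n → {0,1}^n a map that is linear with respect to XOR, i.e., R(x ⊕ y) = R(x) ⊕ R(y) for all x, y. Let k ∈ {0,1}^κ and k₁, k₂ ∈ {0,1}^n, and define the key-alternating reflection cipher KARC_{k,k₁,k₂}(m) = D_{k⊕α}(R(E_k(m ⊕ k₁) ⊕ k₂) ⊕ σ(k₂)) ⊕ σ(k₁). Then for every plaintext m ∈ {0,1}^n with ciphertext c = KARC_{k,k₁,k₂}(m), setting a = E_k(m ⊕ k₁) and b = E_{k⊕α}(c ⊕ σ(k₁)), one has b ⊕ R(a) = R(k₂) ⊕ σ(k₂); in particular b ⊕ R(a) is a fixed value independent of m. -/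
def middleLayer {n w : ℕ} (R σ : BitVec n → BitVec w) (k₂ x : BitVec n) : BitVec w :=
  R (x ^^^ k₂) ^^^ σ k₂

theorem middleLayer_xor_map_self {n w : ℕ} {R : BitVec n → BitVec w}
    (hR : ∀ x y : BitVec n, R (x ^^^ y) = R x ^^^ R y) (σ : BitVec n → BitVec w)
    (k₂ x : BitVec n) :
    middleLayer R σ k₂ x ^^^ R x = R k₂ ^^^ σ k₂ :=
  calc middleLayer R σ k₂ x ^^^ R x = (R x ^^^ R x) ^^^ (R k₂ ^^^ σ k₂) := by
        rw [middleLayer, hR]; ac_rfl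
    _ = R k₂ ^^^ σ k₂ := by rw [BitVec.xor_self, BitVec.zero_xor]

theorem KARC_sieve_value_fixed_general
    (κ n : ℕ)
    (E D : BitVec κ → BitVec n → BitVec n)
    (hED : ∀ k c, E k (D k c) = c)
    (α : BitVec κ) (σ : BitVec n → BitVec n) (R : BitVec n → BitVec n)
    (hR : ∀ x y : BitVec n, R (x ^^^ y) = R x ^^^ R y)
    (k : BitVec κ) (k₁ k₂ : BitVec n) :
    let KARC : BitVec n → BitVec n :=
      fun m => D (k ^^^ α) (R (E k (m ^^^ k₁) ^^^ k₂) ^^^ σ k₂) ^^^ σ k₁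
    ∀ m : BitVec n,
      E (k ^^^ α) (KARC m ^^^ σ k₁) ^^^ R (E k (m ^^^ k₁)) = R k₂ ^^^ σ k₂ := by
  intro KARC m
  have second_round_inverted :
      E (k ^^^ α) (KARC m ^^^ σ k₁) = middleLayer R σ k₂ (E k (m ^^^ k₁)) := by
    rw [xor_cancel_right, hED, middleLayer]
  rw [second_round_inverted, middleLayer_xor_map_self hR]

/-- For the two-round key-alternating reflection cipher
`KARC_{k,k₁,k₂}(m) = D_{k⊕α}(R(E_k(m ⊕ k₁) ⊕ k₂) ⊕ σ(k₂)) ⊕ σ(k₁)` with `R` XOR-linear,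
setting `a = E_k(m ⊕ k₁)` and `b = E_{k⊕α}(c ⊕ σ(k₁))` for `c = KARC(m)`, one has
`b ⊕ R(a) = R(k₂) ⊕ σ(k₂)`, a fixed value independent of `m`. -/
theorem KARC_sieve_value_fixed
    (κ n : ℕ)
    (E D : BitVec κ → BitVec n → BitVec n)
    (hDE : ∀ k m, D k (E k m) = m) (hED : ∀ k c, E k (D k c) = c)
    (α : BitVec κ) (σ : BitVec n → BitVec n) (R : BitVec n → BitVec n)
    (hR : ∀ x y : BitVec n, R (x ^^^ y) = R x ^^^ R y)
    (k : BitVec κ) (k₁ k₂ : BitVec n) :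
    let KARC : BitVec n → BitVec n :=
      fun m => D (k ^^^ α) (R (E k (m ^^^ k₁) ^^^ k₂) ^^^ σ k₂) ^^^ σ k₁
    ∀ m : BitVec n,
      E (k ^^^ α) (KARC m ^^^ σ k₁) ^^^ R (E k (m ^^^ k₁)) = R k₂ ^^^ σ k₂ :=
  KARC_sieve_value_fixed_general κ n E D hED α σ R hR k k₁ k₂
end

section
/- Let E¹, E² be block ciphers with key length κ and block length n, with decryptions D¹, D². Let {L_z : z ∈ {0,1}^n} be a family of permutations of {0,1}^n, let k ∈ {0,1}^κ and k₁, k₂ ∈ {0,1}^n, and define Enc(m) = E²_k(L_{k₂}(E¹_k(m ⊕ k₁))) ⊕ k₁. Assume L_{k₂} is an involution, i.e., L_{k₂}(L_{k₂}(x)) = x for all x. Let m, c* ∈ {0,1}^n, let c = Enc(m), and let m* be the unique plaintext with Enc(m*) = c*. If E¹_k(m ⊕ k₁) = D²_k(c* ⊕ k₁), then D²_k(c ⊕ k₁) = E¹_k(m* ⊕ k₁); that is, (m, m*) is a mirror slid pair. -/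
theorem mirror_slid_pair_involution_general
    (κ n : ℕ)
    (E₁ E₂ D₂ : BitVec κ → BitVec n → BitVec n)
    (hDE₂ : ∀ k m, D₂ k (E₂ k m) = m)
    (L : BitVec n → BitVec n → BitVec n)
    (k : BitVec κ) (k₁ k₂ : BitVec n)
    (hinv : ∀ x : BitVec n, L k₂ (L k₂ x) = x) :
    let Enc : BitVec n → BitVec n :=
      fun m => E₂ k (L k₂ (E₁ k (m ^^^ k₁))) ^^^ k₁
    ∀ m cstar mstar : BitVec n,
      Enc mstar = cstar →
      E₁ k (m ^^^ k₁) = D₂ k (cstar ^^^ k₁) →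
      D₂ k (Enc m ^^^ k₁) = E₁ k (mstar ^^^ k₁) := by
  intro Enc m cstar mstar hstar hpair
  have peel_outer : ∀ x, D₂ k (Enc x ^^^ k₁) = L k₂ (E₁ k (x ^^^ k₁)) := fun x => by
    simp only [Enc, BitVec.xor_assoc, BitVec.xor_self, BitVec.xor_zero, hDE₂]
  rw [peel_outer, hpair, ← hstar, peel_outer, hinv]

/-- For `Enc(m) = E²_k(L_{k₂}(E¹_k(m ⊕ k₁))) ⊕ k₁` with involutive middle
layer `L_{k₂}`, if `E¹_k(m ⊕ k₁) = D²_k(c* ⊕ k₁)` where `c = Enc(m)` and `Enc(m*) = c*`,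
then `D²_k(c ⊕ k₁) = E¹_k(m* ⊕ k₁)`; that is, `(m, m*)` is a mirror slid pair. -/
theorem mirror_slid_pair_involution
    (κ n : ℕ)
    (E₁ D₁ E₂ D₂ : BitVec κ → BitVec n → BitVec n)
    (hDE₁ : ∀ k m, D₁ k (E₁ k m) = m) (hED₁ : ∀ k c, E₁ k (D₁ k c) = c)
    (hDE₂ : ∀ k m, D₂ k (E₂ k m) = m) (hED₂ : ∀ k c, E₂ k (D₂ k c) = c)
    (L : BitVec n → BitVec n → BitVec n)
    (hL : ∀ z : BitVec n, Function.Bijective (L z))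
    (k : BitVec κ) (k₁ k₂ : BitVec n)
    (hinv : ∀ x : BitVec n, L k₂ (L k₂ x) = x) :
    let Enc : BitVec n → BitVec n :=
      fun m => E₂ k (L k₂ (E₁ k (m ^^^ k₁))) ^^^ k₁
    ∀ m cstar mstar : BitVec n,
      Enc mstar = cstar →
      E₁ k (m ^^^ k₁) = D₂ k (cstar ^^^ k₁) →
      D₂ k (Enc m ^^^ k₁) = E₁ k (mstar ^^^ k₁) :=
  mirror_slid_pair_involution_general κ n E₁ E₂ D₂ hDE₂ L k k₁ k₂ hinv
end

section
/- Let E¹, E² be block ciphers with key length κ and block length n, with decryptions D¹, D². Let {L_z : z ∈ {0,1}^n} be a family of permutations of {0,1}^n, let k ∈ {0,1}^κ and k₁, k₂ ∈ {0,1}^n, and define Enc(m) = E²_k(L_{k₂}(E¹_k(m ⊕ k₁))) ⊕ k₁. Assume L_{k₂} is an involution, i.e., L_{k₂}(L_{k₂}(x)) = x for all x. For each i ∈ {0,1}^n, define a_i = D²_k(Enc(D¹_k(i) ⊕ k₁) ⊕ k₁) and b_i = E¹_k(Enc^{-1}(E²_k(i) ⊕ k₁) ⊕ k₁). Then a_i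 = b_i = L_{k₂}(i) for every i ∈ {0,1}^n. -/
/-!
Both whitening layers use the same key `k₁`, so they cancel in the middle of the mirrored
query: `Enc (D¹(x) ⊕ k₁) = E²(L x) ⊕ k₁`. Stripping the outer layers gives `a_i = L i`, and
applying this at `x = L i`, where the involution gives `L (L i) = i`, exhibits the
preimage of `E²(i) ⊕ k₁` under `Enc`, whence `b_i = L i`.
-/

open Function

section Whitening

variable {α β γ : Type*} {w : α → α} {E₁ : α → β} {D₁ : β → α} {L : β → γ} {E₂ : γ → α}
  {Enc : α → α}

theorem enc_whiten_decrypt_eq (hw : Involutive w) (hED₁ : LeftInverse E₁ D₁)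
    (hEnc : ∀ m, Enc m = w (E₂ (L (E₁ (w m))))) (x : β) :
    Enc (w (D₁ x)) = w (E₂ (L x)) := by
  rw [hEnc, hw, hED₁]

theorem decrypt_whiten_enc_eq {D₂ : α → γ} (hw : Involutive w) (hED₁ : LeftInverse E₁ D₁)
    (hDE₂ : LeftInverse D₂ E₂) (hEnc : ∀ m, Enc m = w (E₂ (L (E₁ (w m))))) (x : β) :
    D₂ (w (Enc (w (D₁ x)))) = L x := by
  rw [enc_whiten_decrypt_eq hw hED₁ hEnc, hw, hDE₂]

theorem encrypt_whiten_encInv_eq {L : β → β} {E₂ : β → α} {EncInv : α → α}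
    (hw : Involutive w) (hED₁ : LeftInverse E₁ D₁) (hL : Involutive L)
    (hEnc : ∀ m, Enc m = w (E₂ (L (E₁ (w m))))) (hInvEnc : LeftInverse EncInv Enc) (x : β) :
    E₁ (w (EncInv (w (E₂ x)))) = L x := by
  have hpre : Enc (w (D₁ (L x))) = w (E₂ x) := by
    rw [enc_whiten_decrypt_eq hw hED₁ hEnc, hL]
  rw [← hpre, hInvEnc, hw, hED₁]

end Whitening

theorem Q2_sieve_values_involution_general
    (κ n : ℕ)
    (E₁ D₁ E₂ D₂ : BitVec κ → BitVec n → BitVec n)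
    (hED₁ : ∀ k c, E₁ k (D₁ k c) = c)
    (hDE₂ : ∀ k m, D₂ k (E₂ k m) = m)
    (L : BitVec n → BitVec n → BitVec n)
    (k : BitVec κ) (k₁ k₂ : BitVec n)
    (hinv : ∀ x : BitVec n, L k₂ (L k₂ x) = x)
    (Enc EncInv : BitVec n → BitVec n)
    (hEnc : ∀ m : BitVec n, Enc m = E₂ k (L k₂ (E₁ k (m ^^^ k₁))) ^^^ k₁)
    (hInvEnc : ∀ m : BitVec n, EncInv (Enc m) = m) :
    ∀ i : BitVec n,
      D₂ k (Enc (D₁ k i ^^^ k₁) ^^^ k₁) = L k₂ i ∧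
      E₁ k (EncInv (E₂ k i ^^^ k₁) ^^^ k₁) = L k₂ i := fun i =>
  ⟨decrypt_whiten_enc_eq (xor_left_involutive k₁) (hED₁ k) (hDE₂ k) hEnc i,
    encrypt_whiten_encInv_eq (xor_left_involutive k₁) (hED₁ k) hinv hEnc hInvEnc i⟩

/-- For `Enc(m) = E²_k(L_{k₂}(E¹_k(m ⊕ k₁))) ⊕ k₁` with involutive middle
layer `L_{k₂}`, the Q2-model sieve values
`a_i = D²_k(Enc(D¹_k(i) ⊕ k₁) ⊕ k₁)` and `b_i = E¹_k(Enc⁻¹(E²_k(i) ⊕ k₁) ⊕ k₁)` satisfy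
`a_i = b_i = L_{k₂}(i)` for every `i`. -/
theorem Q2_sieve_values_involution
    (κ n : ℕ)
    (E₁ D₁ E₂ D₂ : BitVec κ → BitVec n → BitVec n)
    (hDE₁ : ∀ k m, D₁ k (E₁ k m) = m) (hED₁ : ∀ k c, E₁ k (D₁ k c) = c)
    (hDE₂ : ∀ k m, D₂ k (E₂ k m) = m) (hED₂ : ∀ k c, E₂ k (D₂ k c) = c)
    (L : BitVec n → BitVec n → BitVec n)
    (hL : ∀ z : BitVec n, Function.Bijective (L z))
    (k : BitVec κ) (k₁ k₂ : BitVec n)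
    (hinv : ∀ x : BitVec n, L k₂ (L k₂ x) = x)
    (Enc EncInv : BitVec n → BitVec n)
    (hEnc : ∀ m : BitVec n, Enc m = E₂ k (L k₂ (E₁ k (m ^^^ k₁))) ^^^ k₁)
    (hInvEnc : ∀ m : BitVec n, EncInv (Enc m) = m)
    (hEncInv : ∀ c : BitVec n, Enc (EncInv c) = c) :
    ∀ i : BitVec n,
      D₂ k (Enc (D₁ k i ^^^ k₁) ^^^ k₁) = L k₂ i ∧
      E₁ k (EncInv (E₂ k i ^^^ k₁) ^^^ k₁) = L k₂ i :=
  Q2_sieve_values_involution_general κ n E₁ D₁ E₂ D₂ hED₁ hDE₂ L k k₁ k₂ hinv Enc EncInv hEnc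
    hInvEnc
end

section
/- Let E¹, E² be block ciphers with key length κ and block length n, with decryptions D¹, D². Let {L_z : z ∈ {0,1}^n} be a family of permutations of {0,1}^n, let P : {0,1}^n → {0,1}^n be a fixed (key-independent) map, let k ∈ {0,1}^κ and k₁, k₂ ∈ {0,1}^n, and define Enc(m) = E²_k(L_{k₂}(E¹_k(m ⊕ k₁))) ⊕ k₁. Assume L_{k₂} ∘ P ∘ L_{k₂} = Id, i.e., L_{k₂}(P(L_{k₂}(x))) = x for all x. For each i ∈ {0,1}^n, define a_i = D²_k(Enc(D¹_k(i) ⊕ k₁) ⊕ k₁) and b_i = E¹_k(Enc^{-1}(E²_k(i) ⊕ k₁) ⊕ k₁). Then P(a_i) = b_i for every i ∈ {0,1}^n. -/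
/-!
Unwinding the whitening and the outer rounds, the sieve value `a_i` equals `L_{k₂}(i)`, while
`b_i` is the unique `y` with `L_{k₂}(y) = i`. The identity `L ∘ P ∘ L = Id` makes `L`
injective, and applying `L` to `P(L(L y))` gives `L y`; hence `P(a_i) = P(L(L y)) = y = b_i`.
-/

open Function

theorem Function.LeftInverse.comp_self_of_comp {α : Type*} {L P : α → α}
    (hLPL : LeftInverse (L ∘ P) L) : LeftInverse P (L ∘ L) :=
  fun y => hLPL.injective (hLPL (L y))

section Sieve

variable {α : Type*} {w E₁ D₁ E₂ D₂ L Enc EncInv : α → α}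

theorem sieve_forward_eq (hw : Involutive w) (hED₁ : RightInverse D₁ E₁)
    (hDE₂ : LeftInverse D₂ E₂) (hEnc : ∀ m, Enc m = w (E₂ (L (E₁ (w m))))) (i : α) :
    D₂ (w (Enc (w (D₁ i)))) = L i := by
  rw [hEnc, hw, hw, hED₁, hDE₂]

theorem sieve_backward_apply (hw : Involutive w) (hDE₂ : LeftInverse D₂ E₂)
    (hEnc : ∀ m, Enc m = w (E₂ (L (E₁ (w m))))) (hEncInv : RightInverse EncInv Enc) (i : α) :
    L (E₁ (w (EncInv (w (E₂ i))))) = i := by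
  have hE₂ : E₂ (L (E₁ (w (EncInv (w (E₂ i)))))) = E₂ i := by
    rw [← hw (E₂ _), ← hEnc, hEncInv, hw]
  exact hDE₂.injective hE₂

end Sieve

theorem Q2_sieve_values_LPL_general
    (κ n : ℕ)
    (E₁ D₁ E₂ D₂ : BitVec κ → BitVec n → BitVec n)
    (hED₁ : ∀ k c, E₁ k (D₁ k c) = c)
    (hDE₂ : ∀ k m, D₂ k (E₂ k m) = m)
    (L : BitVec n → BitVec n → BitVec n)
    (P : BitVec n → BitVec n)
    (k : BitVec κ) (k₁ k₂ : BitVec n)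
    (hLPL : ∀ x : BitVec n, L k₂ (P (L k₂ x)) = x)
    (Enc EncInv : BitVec n → BitVec n)
    (hEnc : ∀ m : BitVec n, Enc m = E₂ k (L k₂ (E₁ k (m ^^^ k₁))) ^^^ k₁)
    (hEncInv : ∀ c : BitVec n, Enc (EncInv c) = c) :
    ∀ i : BitVec n,
      P (D₂ k (Enc (D₁ k i ^^^ k₁) ^^^ k₁)) =
        E₁ k (EncInv (E₂ k i ^^^ k₁) ^^^ k₁) := by
  intro i
  have hw : Involutive (· ^^^ k₁) := xor_left_involutive k₁
  have ha : D₂ k (Enc (D₁ k i ^^^ k₁) ^^^ k₁) = L k₂ i :=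
    sieve_forward_eq hw (hED₁ k) (hDE₂ k) hEnc i
  obtain ⟨y, hy, hb⟩ : ∃ y, y = E₁ k (EncInv (E₂ k i ^^^ k₁) ^^^ k₁) ∧ L k₂ y = i :=
    ⟨_, rfl, sieve_backward_apply hw (hDE₂ k) hEnc hEncInv i⟩
  rw [ha, ← hy, ← hb]
  exact LeftInverse.comp_self_of_comp hLPL y

/-- For `Enc(m) = E²_k(L_{k₂}(E¹_k(m ⊕ k₁))) ⊕ k₁` with middle layer
satisfying `L_{k₂} ∘ P ∘ L_{k₂} = Id` for a key-independent map `P`, the Q2-model sieve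
values `a_i = D²_k(Enc(D¹_k(i) ⊕ k₁) ⊕ k₁)` and `b_i = E¹_k(Enc⁻¹(E²_k(i) ⊕ k₁) ⊕ k₁)`
satisfy `P(a_i) = b_i` for every `i`. -/
theorem Q2_sieve_values_LPL
    (κ n : ℕ)
    (E₁ D₁ E₂ D₂ : BitVec κ → BitVec n → BitVec n)
    (hDE₁ : ∀ k m, D₁ k (E₁ k m) = m) (hED₁ : ∀ k c, E₁ k (D₁ k c) = c)
    (hDE₂ : ∀ k m, D₂ k (E₂ k m) = m) (hED₂ : ∀ k c, E₂ k (D₂ k c) = c)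
    (L : BitVec n → BitVec n → BitVec n)
    (hL : ∀ z : BitVec n, Function.Bijective (L z))
    (P : BitVec n → BitVec n)
    (k : BitVec κ) (k₁ k₂ : BitVec n)
    (hLPL : ∀ x : BitVec n, L k₂ (P (L k₂ x)) = x)
    (Enc EncInv : BitVec n → BitVec n)
    (hEnc : ∀ m : BitVec n, Enc m = E₂ k (L k₂ (E₁ k (m ^^^ k₁))) ^^^ k₁)
    (hInvEnc : ∀ m : BitVec n, EncInv (Enc m) = m)
    (hEncInv : ∀ c : BitVec n, Enc (EncInv c) = c) :
    ∀ i : BitVec n,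
      P (D₂ k (Enc (D₁ k i ^^^ k₁) ^^^ k₁)) =
        E₁ k (EncInv (E₂ k i ^^^ k₁) ^^^ k₁) :=
  Q2_sieve_values_LPL_general κ n E₁ D₁ E₂ D₂ hED₁ hDE₂ L P k k₁ k₂ hLPL Enc EncInv hEnc hEncInv
end
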